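/- Let G=(V,w,m) be a finite connected weighted graph satisfying the curvature dimension condition CD(K,n) for some K>0 and n<∞, with deg(x) > 0 for all x. Then for all vertices x₀, y₀ ∈ V, the resistance distance satisfies ρ(x₀,y₀) ≤ √(n/K) · ( arcsin( 1/√(Kn/(2·Deg(x₀)) + 1) ) + arcsin( 1/√(Kn/(2·Deg(y₀)) + 1) ) ). -/

import Mathlib

open Filter

variable {V : Type*}

/-- The degree of a vertex in a finite weighted graph. -/
noncomputable def vertexDeg [Fintype V] (w : V → V → ℝ) (x : V) : ℝ := ∑ y, w x y

/-- The normalized degree `Deg(x) = deg(x)/m(x)`. -/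
noncomputable def nDeg [Fintype V] (w : V → V → ℝ) (m : V → ℝ) (x : V) : ℝ :=
  vertexDeg w x / m x

/-- The graph Laplacian `Δf(x) = (1/m(x)) ∑_y w(x,y)(f(y) - f(x))` on a finite weighted graph. -/
noncomputable def graphLap [Fintype V] (w : V → V → ℝ) (m : V → ℝ) (f : V → ℝ) (x : V) : ℝ :=
  (1 / m x) * ∑ y, w x y * (f y - f x)

/-- The Bakry–Émery operator `Γ`, defined by `2Γ(f,g) = Δ(fg) - fΔg - gΔf`. -/
noncomputable def bakryGamma [Fintype V] (w : V → V → ℝ) (m : V → ℝ) (f g : V → ℝ) (x : V) : ℝ :=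
  (graphLap w m (fun z => f z * g z) x - f x * graphLap w m g x - g x * graphLap w m f x) / 2

/-- The iterated Bakry–Émery operator `Γ₂`, defined by
`2Γ₂(f,g) = ΔΓ(f,g) - Γ(f,Δg) - Γ(g,Δf)`. -/
noncomputable def bakryGamma2 [Fintype V] (w : V → V → ℝ) (m : V → ℝ) (f g : V → ℝ) (x : V) : ℝ :=
  (graphLap w m (bakryGamma w m f g) x - bakryGamma w m f (graphLap w m g) x
    - bakryGamma w m g (graphLap w m f) x) / 2

/-- The curvature dimension condition `CD(K,n)`: `Γ₂(f) ≥ (1/n)(Δf)² + KΓf` pointwise. -/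
def CDCond [Fintype V] (w : V → V → ℝ) (m : V → ℝ) (K n : ℝ) : Prop :=
  ∀ f : V → ℝ, ∀ x : V,
    (1 / n) * (graphLap w m f x) ^ 2 + K * bakryGamma w m f f x ≤ bakryGamma2 w m f f x

/-- The matrix of the graph Laplacian: `(lapMatrix w m).mulVec f = graphLap w m f`. -/
noncomputable def lapMatrix [Fintype V] [DecidableEq V] (w : V → V → ℝ) (m : V → ℝ) :
    Matrix V V ℝ :=
  fun x y => w x y / m x - if x = y then vertexDeg w x / m x else 0

/-- The heat semigroup `P_t = exp (tΔ)`, as the matrix exponential of `t • Δ`. -/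
noncomputable def heatSemigroup [Fintype V] [DecidableEq V] (w : V → V → ℝ) (m : V → ℝ)
    (t : ℝ) (f : V → ℝ) : V → ℝ :=
  (NormedSpace.exp (t • lapMatrix w m)).mulVec f

/-- Connectedness of a weighted graph: any two vertices are joined by a finite path of
consecutive neighbors. -/
def GraphConnected (w : V → V → ℝ) : Prop :=
  ∀ x y : V, ∃ (k : ℕ) (p : ℕ → V), p 0 = x ∧ p k = y ∧ ∀ i < k, 0 < w (p i) (p (i + 1))

/-- The resistance distance `ρ(x,y) = sup {|f(y) - f(x)| : Γf ≤ 1 pointwise}`. -/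
noncomputable def resistDist [Fintype V] (w : V → V → ℝ) (m : V → ℝ) (x y : V) : ℝ :=
  sSup {r : ℝ | ∃ f : V → ℝ, (∀ z, bakryGamma w m f f z ≤ 1) ∧ r = |f y - f x|}


open scoped Nat Matrix

section Aux


variable [Fintype V] (w : V → V → ℝ) (m : V → ℝ)

lemma gamma_eq (f g : V → ℝ) (x : V) :
    bakryGamma w m f g x = (1 / (2 * m x)) * ∑ y, w x y * (f y - f x) * (g y - g x) := by
  unfold bakryGamma graphLap
  rw [div_eq_iff (two_ne_zero)]
  simp only [Finset.mul_sum]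
  rw [← Finset.sum_sub_distrib, ← Finset.sum_sub_distrib, Finset.sum_mul]
  refine Finset.sum_congr rfl fun y _ => ?_
  rcases eq_or_ne (m x) 0 with h | h
  · simp [h]
  · field_simp
    ring

lemma gamma_self_eq (f : V → ℝ) (x : V) :
    bakryGamma w m f f x = (1 / (2 * m x)) * ∑ y, w x y * (f y - f x) ^ 2 := by
  rw [gamma_eq]
  congr 1
  exact Finset.sum_congr rfl fun y _ => by ring

lemma gamma_comm (f g : V → ℝ) (x : V) :
    bakryGamma w m f g x = bakryGamma w m g f x := by
  rw [gamma_eq, gamma_eq]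
  congr 1
  exact Finset.sum_congr rfl fun y _ => by ring

lemma gamma2_self_eq (f : V → ℝ) (x : V) :
    2 * bakryGamma2 w m f f x
      = graphLap w m (fun y => bakryGamma w m f f y) x
        - 2 * bakryGamma w m f (graphLap w m f) x := by
  unfold bakryGamma2
  ring

lemma gamma_nonneg (hnonneg : ∀ x y, 0 ≤ w x y) (hm : ∀ x, 0 < m x) (f : V → ℝ) (x : V) :
    0 ≤ bakryGamma w m f f x := by
  rw [gamma_self_eq]
  have h1 : (0:ℝ) ≤ 1 / (2 * m x) := by
    have := hm x
    positivity
  exact mul_nonneg h1 (Finset.sum_nonneg fun y _ => mul_nonneg (hnonneg x y) (sq_nonneg _))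

lemma lap_sq_le (hnonneg : ∀ x y, 0 ≤ w x y) (hm : ∀ x, 0 < m x) (f : V → ℝ) (x : V) :
    (graphLap w m f x) ^ 2 ≤ 2 * nDeg w m x * bakryGamma w m f f x := by
  have hCS := Finset.sum_mul_sq_le_sq_mul_sq Finset.univ
    (fun y => Real.sqrt (w x y)) (fun y => Real.sqrt (w x y) * (f y - f x))
  have hre : ∀ y, Real.sqrt (w x y) * (Real.sqrt (w x y) * (f y - f x)) = w x y * (f y - f x) := by
    intro y
    rw [← mul_assoc, Real.mul_self_sqrt (hnonneg x y)]
  have hre2 : ∀ y, (Real.sqrt (w x y))^2 = w x y := fun y => Real.sq_sqrt (hnonneg x y)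
  have hre3 : ∀ y, (Real.sqrt (w x y) * (f y - f x))^2 = w x y * (f y - f x)^2 := by
    intro y
    rw [mul_pow, hre2]
  simp only [hre, hre2, hre3] at hCS
  -- hCS : (∑ y, w x y * (f y - f x))^2 ≤ (∑ y, w x y) * (∑ y, w x y * (f y - f x)^2)
  rw [graphLap, gamma_self_eq, nDeg, vertexDeg, mul_pow]
  have hmx := hm x
  rw [div_pow, one_pow]
  calc 1 / m x ^ 2 * (∑ y, w x y * (f y - f x)) ^ 2
      ≤ 1 / m x ^ 2 * ((∑ y, w x y) * ∑ y, w x y * (f y - f x)^2) := by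
        apply mul_le_mul_of_nonneg_left hCS (by positivity)
    _ = 2 * ((∑ y, w x y) / m x) * (1 / (2 * m x) * ∑ y, w x y * (f y - f x) ^ 2) := by
        field_simp

end Aux

section Mat


variable [Fintype V] [DecidableEq V]

/-- evaluation of `A *ᵥ v` at `x`, as a linear map in `A`. -/
noncomputable def mvLin (v : V → ℝ) (x : V) : Matrix V V ℝ →ₗ[ℝ] ℝ where
  toFun A := (A *ᵥ v) x
  map_add' A B := by simp [Matrix.add_mulVec, Pi.add_apply]
  map_smul' c A := by simp [Matrix.smul_mulVec]

lemma exp_linear (lmap : Matrix V V ℝ →ₗ[ℝ] ℝ) (A : Matrix V V ℝ) :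
    lmap (NormedSpace.exp A) = ∑' k : ℕ, ((k)!⁻¹ : ℝ) * lmap (A ^ k) := by
  letI : SeminormedRing (Matrix V V ℝ) := Matrix.linftyOpSemiNormedRing
  letI : NormedRing (Matrix V V ℝ) := Matrix.linftyOpNormedRing
  letI : NormedAlgebra ℝ (Matrix V V ℝ) := Matrix.linftyOpNormedAlgebra
  letI : CompleteSpace (Matrix V V ℝ) := FiniteDimensional.complete ℝ _
  have hlmap : Continuous lmap := LinearMap.continuous_of_finiteDimensional lmap
  let Φ : Matrix V V ℝ →L[ℝ] ℝ := ⟨lmap, hlmap⟩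
  have h1 : NormedSpace.exp A = ∑' k : ℕ, ((k)!⁻¹ : ℝ) • A ^ k := by
    rw [NormedSpace.exp_eq_tsum ℝ]
  rw [h1]
  have h2 : lmap (∑' k : ℕ, ((k)!⁻¹ : ℝ) • A ^ k) = ∑' k : ℕ, lmap (((k)!⁻¹ : ℝ) • A ^ k) :=
    Φ.map_tsum (NormedSpace.expSeries_summable' (𝕂 := ℝ) A)
  rw [h2]
  exact tsum_congr fun k => by rw [map_smul, smul_eq_mul]

lemma exp_mulVec_entry (A : Matrix V V ℝ) (v : V → ℝ) (x : V) :
    (NormedSpace.exp A *ᵥ v) x = ∑' k : ℕ, ((k)!⁻¹ : ℝ) * ((A ^ k *ᵥ v) x) :=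
  exp_linear (mvLin v x) A

/-- entry of a matrix, as a linear map. -/
noncomputable def entryLin (x y : V) : Matrix V V ℝ →ₗ[ℝ] ℝ where
  toFun A := A x y
  map_add' A B := rfl
  map_smul' c A := rfl

lemma exp_entry (A : Matrix V V ℝ) (x y : V) :
    NormedSpace.exp A x y = ∑' k : ℕ, ((k)!⁻¹ : ℝ) * (A ^ k) x y :=
  exp_linear (entryLin x y) A

lemma pow_entry_nonneg {A : Matrix V V ℝ} (hA : ∀ x y, 0 ≤ A x y) (k : ℕ) :
    ∀ x y, 0 ≤ (A ^ k) x y := by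
  induction k with
  | zero => intro x y; simp [Matrix.one_apply]; positivity
  | succ k ih =>
    intro x y
    rw [pow_succ, Matrix.mul_apply]
    exact Finset.sum_nonneg fun z _ => mul_nonneg (ih x z) (hA z y)

lemma exp_entry_nonneg {A : Matrix V V ℝ} (hA : ∀ x y, 0 ≤ A x y) (x y : V) :
    0 ≤ NormedSpace.exp A x y := by
  rw [exp_entry]
  refine tsum_nonneg fun k => mul_nonneg (by positivity) (pow_entry_nonneg hA k x y)

lemma exp_smul_one (s : ℝ) :
    NormedSpace.exp (s • (1 : Matrix V V ℝ)) = Real.exp s • (1 : Matrix V V ℝ) := by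
  rw [Matrix.smul_one_eq_diagonal, Matrix.exp_diagonal, Matrix.smul_one_eq_diagonal]
  have h : NormedSpace.exp (fun _ : V => s) = fun _ : V => Real.exp s := by
    rw [Pi.exp_def]
    funext i
    exact (congrFun Real.exp_eq_exp_ℝ s).symm
  rw [h]

end Mat
section Heat

variable [Fintype V] [DecidableEq V] (w : V → V → ℝ) (m : V → ℝ)

lemma lapMatrix_mulVec (f : V → ℝ) : lapMatrix w m *ᵥ f = graphLap w m f := by
  funext x
  have h1 : (lapMatrix w m *ᵥ f) x
      = (∑ y, w x y / m x * f y) - vertexDeg w x / m x * f x := by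
    simp only [Matrix.mulVec, dotProduct, lapMatrix, sub_mul, ite_mul, zero_mul,
      Finset.sum_sub_distrib, Finset.sum_ite_eq, Finset.mem_univ, if_true]
  rw [h1, graphLap, Finset.mul_sum, vertexDeg, Finset.sum_div, Finset.sum_mul,
    ← Finset.sum_sub_distrib]
  exact Finset.sum_congr rfl fun y _ => by ring

lemma lapMatrix_mulVec_one : lapMatrix w m *ᵥ (fun _ => (1:ℝ)) = 0 := by
  funext x
  have h1 : (lapMatrix w m *ᵥ fun _ => (1:ℝ)) x
      = (∑ y, w x y / m x * 1) - vertexDeg w x / m x * 1 := by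
    simp only [Matrix.mulVec, dotProduct, lapMatrix, sub_mul, ite_mul, zero_mul,
      Finset.sum_sub_distrib, Finset.sum_ite_eq, Finset.mem_univ, if_true]
  rw [h1]
  simp only [mul_one, vertexDeg, Finset.sum_div, Pi.zero_apply, sub_self]

lemma pow_mulVec_one (k : ℕ) :
    lapMatrix w m ^ (k + 1) *ᵥ (fun _ => (1:ℝ)) = 0 := by
  rw [pow_succ, ← Matrix.mulVec_mulVec, lapMatrix_mulVec_one, Matrix.mulVec_zero]

lemma heat_mulVec_one (t : ℝ) :
    NormedSpace.exp (t • lapMatrix w m) *ᵥ (fun _ => (1:ℝ)) = fun _ => (1:ℝ) := by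
  funext x
  rw [exp_mulVec_entry]
  have hterm : ∀ k : ℕ, ((k)!⁻¹ : ℝ) * (((t • lapMatrix w m) ^ k *ᵥ fun _ => (1:ℝ)) x)
      = if k = 0 then 1 else 0 := by
    intro k
    cases k with
    | zero => simp
    | succ k =>
      rw [smul_pow, Matrix.smul_mulVec, pow_mulVec_one]
      simp
  rw [tsum_congr hterm, tsum_eq_single 0 (fun k hk => by simp [hk])]
  simp

/-- entries of the heat semigroup are nonnegative for `t ≥ 0`. -/
lemma heat_entry_nonneg (hnonneg : ∀ x y, 0 ≤ w x y) (hm : ∀ x, 0 < m x)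
    {t : ℝ} (ht : 0 ≤ t) (x y : V) :
    0 ≤ NormedSpace.exp (t • lapMatrix w m) x y := by
  set c : ℝ := ∑ z, vertexDeg w z / m z with hc
  have hcz : ∀ z : V, vertexDeg w z / m z ≤ c := by
    intro z
    refine Finset.single_le_sum (f := fun z => vertexDeg w z / m z) ?_ (Finset.mem_univ z)
    intro u _
    exact div_nonneg (Finset.sum_nonneg fun y _ => hnonneg u y) (hm u).le
  set N : Matrix V V ℝ := t • lapMatrix w m + (t * c) • 1 with hN
  have hNpos : ∀ a b, 0 ≤ N a b := by
    intro a b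
    simp only [hN, Matrix.add_apply, Matrix.smul_apply, lapMatrix, Matrix.one_apply,
      smul_eq_mul]
    rcases eq_or_ne a b with rfl | hab
    · simp only [if_true]
      have h1 : w a a = 0 ∨ 0 ≤ w a a := Or.inr (hnonneg a a)
      have : w a a / m a - vertexDeg w a / m a + c ≥ 0 := by
        have := hcz a
        have h2 : 0 ≤ w a a / m a := div_nonneg (hnonneg a a) (hm a).le
        linarith
      nlinarith [this, ht]
    · simp only [hab, if_false, mul_zero, add_zero, sub_zero]
      exact mul_nonneg ht (div_nonneg (hnonneg a b) (hm a).le)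
  have hsplit : t • lapMatrix w m = N + (-(t * c)) • 1 := by
    rw [hN]; ring_nf; rw [neg_smul]; abel
  have hcomm : Commute N ((-(t * c)) • (1 : Matrix V V ℝ)) :=
    (Commute.one_right N).smul_right _
  rw [hsplit, Matrix.exp_add_of_commute N _ hcomm, exp_smul_one, Matrix.mul_smul,
    Matrix.mul_one, Matrix.smul_apply, smul_eq_mul]
  exact mul_nonneg (Real.exp_nonneg _) (exp_entry_nonneg hNpos x y)

end Heat
section Heat2

variable [Fintype V] [DecidableEq V] (w : V → V → ℝ) (m : V → ℝ)

lemma heat_zero : NormedSpace.exp ((0:ℝ) • lapMatrix w m) = 1 := by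
  rw [zero_smul]
  exact NormedSpace.exp_zero

lemma heat_monotone (hnonneg : ∀ x y, 0 ≤ w x y) (hm : ∀ x, 0 < m x) {t : ℝ} (ht : 0 ≤ t)
    {u v : V → ℝ} (huv : ∀ z, u z ≤ v z) (x : V) :
    (NormedSpace.exp (t • lapMatrix w m) *ᵥ u) x
      ≤ (NormedSpace.exp (t • lapMatrix w m) *ᵥ v) x := by
  simp only [Matrix.mulVec, dotProduct]
  exact Finset.sum_le_sum fun y _ =>
    mul_le_mul_of_nonneg_left (huv y) (heat_entry_nonneg w m hnonneg hm ht x y)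

lemma heat_le_one (hnonneg : ∀ x y, 0 ≤ w x y) (hm : ∀ x, 0 < m x) {t : ℝ} (ht : 0 ≤ t)
    {u : V → ℝ} (hu : ∀ z, u z ≤ 1) (x : V) :
    (NormedSpace.exp (t • lapMatrix w m) *ᵥ u) x ≤ 1 := by
  have h := heat_monotone w m hnonneg hm ht (v := fun _ => (1:ℝ)) hu x
  rwa [heat_mulVec_one] at h

lemma heat_row_sum_one (t : ℝ) (x : V) :
    ∑ y, NormedSpace.exp (t • lapMatrix w m) x y = 1 := by
  have h := congrFun (heat_mulVec_one w m t) x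
  simpa [Matrix.mulVec, dotProduct] using h

lemma heat_jensen (hnonneg : ∀ x y, 0 ≤ w x y) (hm : ∀ x, 0 < m x) {t : ℝ} (ht : 0 ≤ t)
    (u : V → ℝ) (x : V) :
    ((NormedSpace.exp (t • lapMatrix w m) *ᵥ u) x) ^ 2
      ≤ (NormedSpace.exp (t • lapMatrix w m) *ᵥ fun y => (u y) ^ 2) x := by
  set p : V → ℝ := fun y => NormedSpace.exp (t • lapMatrix w m) x y with hp
  have hpn : ∀ y, 0 ≤ p y := fun y => heat_entry_nonneg w m hnonneg hm ht x y
  have hCS := Finset.sum_mul_sq_le_sq_mul_sq Finset.univ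
    (fun y => Real.sqrt (p y)) (fun y => Real.sqrt (p y) * u y)
  have h1 : ∀ y, Real.sqrt (p y) * (Real.sqrt (p y) * u y) = p y * u y := by
    intro y; rw [← mul_assoc, Real.mul_self_sqrt (hpn y)]
  have h2 : ∀ y, (Real.sqrt (p y)) ^ 2 = p y := fun y => Real.sq_sqrt (hpn y)
  have h3 : ∀ y, (Real.sqrt (p y) * u y) ^ 2 = p y * (u y) ^ 2 := by
    intro y; rw [mul_pow, h2]
  simp only [h1, h2, h3] at hCS
  have h4 : ∑ y, p y = 1 := heat_row_sum_one w m t x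
  rw [h4, one_mul] at hCS
  simpa [Matrix.mulVec, dotProduct] using hCS

lemma heat_add (s u : ℝ) :
    NormedSpace.exp ((s + u) • lapMatrix w m)
      = NormedSpace.exp (s • lapMatrix w m) * NormedSpace.exp (u • lapMatrix w m) := by
  rw [add_smul]
  exact Matrix.exp_add_of_commute _ _
    (((Commute.refl (lapMatrix w m)).smul_left s).smul_right u)

lemma heat_commute_L (s : ℝ) :
    lapMatrix w m * NormedSpace.exp (s • lapMatrix w m)
      = NormedSpace.exp (s • lapMatrix w m) * lapMatrix w m := by
  letI : SeminormedRing (Matrix V V ℝ) := Matrix.linftyOpSemiNormedRing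
  letI : NormedRing (Matrix V V ℝ) := Matrix.linftyOpNormedRing
  letI : NormedAlgebra ℝ (Matrix V V ℝ) := Matrix.linftyOpNormedAlgebra
  letI : CompleteSpace (Matrix V V ℝ) := FiniteDimensional.complete ℝ _
  exact (((Commute.refl (lapMatrix w m)).smul_right s).exp_right).eq

lemma heat_hasDerivAt (v : V → ℝ) (x : V) (t : ℝ) :
    HasDerivAt (fun s => (NormedSpace.exp (s • lapMatrix w m) *ᵥ v) x)
      (((lapMatrix w m * NormedSpace.exp (t • lapMatrix w m)) *ᵥ v) x) t := by
  letI : SeminormedRing (Matrix V V ℝ) := Matrix.linftyOpSemiNormedRing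
  letI : NormedRing (Matrix V V ℝ) := Matrix.linftyOpNormedRing
  letI : NormedAlgebra ℝ (Matrix V V ℝ) := Matrix.linftyOpNormedAlgebra
  letI : CompleteSpace (Matrix V V ℝ) := FiniteDimensional.complete ℝ _
  have h := hasDerivAt_exp_smul_const' (𝕂 := ℝ) (lapMatrix w m) t
  have hc : Continuous (mvLin v x) := LinearMap.continuous_of_finiteDimensional _
  let Φ : Matrix V V ℝ →L[ℝ] ℝ := ⟨mvLin v x, hc⟩
  exact Φ.hasFDerivAt.comp_hasDerivAt t h

lemma heat_entry_hasDerivAt (x y : V) (t : ℝ) :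
    HasDerivAt (fun s => NormedSpace.exp (s • lapMatrix w m) x y)
      ((lapMatrix w m * NormedSpace.exp (t • lapMatrix w m)) x y) t := by
  letI : SeminormedRing (Matrix V V ℝ) := Matrix.linftyOpSemiNormedRing
  letI : NormedRing (Matrix V V ℝ) := Matrix.linftyOpNormedRing
  letI : NormedAlgebra ℝ (Matrix V V ℝ) := Matrix.linftyOpNormedAlgebra
  letI : CompleteSpace (Matrix V V ℝ) := FiniteDimensional.complete ℝ _
  have h := hasDerivAt_exp_smul_const' (𝕂 := ℝ) (lapMatrix w m) t
  have hc : Continuous (entryLin x y) := LinearMap.continuous_of_finiteDimensional _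
  let Φ : Matrix V V ℝ →L[ℝ] ℝ := ⟨entryLin x y, hc⟩
  exact Φ.hasFDerivAt.comp_hasDerivAt t h

lemma heat_hasDerivAt_rev (v : V → ℝ) (x : V) (τ s : ℝ) :
    HasDerivAt (fun u => (NormedSpace.exp ((τ - u) • lapMatrix w m) *ᵥ v) x)
      (-(((lapMatrix w m * NormedSpace.exp ((τ - s) • lapMatrix w m)) *ᵥ v) x)) s := by
  have h1 : HasDerivAt (fun u : ℝ => τ - u) (-1) s := (hasDerivAt_id s).const_sub τ
  have h2 := (heat_hasDerivAt w m v x (τ - s)).comp s h1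
  simpa [Function.comp_def] using h2

end Heat2
lemma mono_of_hasDeriv {F F' : ℝ → ℝ} (hF : ∀ s, HasDerivAt F (F' s) s)
    {t : ℝ} (ht : 0 ≤ t) (h0 : ∀ s, 0 ≤ s → 0 ≤ F' s) : F 0 ≤ F t := by
  have hmono : MonotoneOn F (Set.Ici (0:ℝ)) := by
    apply monotoneOn_of_deriv_nonneg (convex_Ici 0)
    · exact fun s _ => (hF s).continuousAt.continuousWithinAt
    · intro s _
      exact (hF s).differentiableAt.differentiableWithinAt
    · intro s hs
      rw [(hF s).deriv]
      rw [interior_Ici] at hs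
      exact h0 s (le_of_lt hs)
  exact hmono (by simp) (by simpa using ht) ht

section Core

variable [Fintype V] [DecidableEq V] (w : V → V → ℝ) (m : V → ℝ)

lemma mulVec_app (A : Matrix V V ℝ) (v : V → ℝ) (x : V) :
    (A *ᵥ v) x = ∑ y, A x y * v y := rfl

lemma core_estimate (hnonneg : ∀ x y, 0 ≤ w x y) (hm : ∀ x, 0 < m x)
    (K n : ℝ) (hK : 0 < K) (hn : 0 < n) (hCD : CDCond w m K n)
    (f : V → ℝ) (hf : ∀ z, bakryGamma w m f f z ≤ 1)
    {τ : ℝ} (hτ : 0 ≤ τ) (x : V) :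
    bakryGamma w m (NormedSpace.exp (τ • lapMatrix w m) *ᵥ f)
        (NormedSpace.exp (τ • lapMatrix w m) *ᵥ f) x
      + (graphLap w m (NormedSpace.exp (τ • lapMatrix w m) *ᵥ f) x) ^ 2 / (n * K)
          * (1 - Real.exp (-(2 * K * τ)))
      ≤ Real.exp (-(2 * K * τ)) := by
  classical
  -- abbreviations (as plain defs to keep rewriting easy)
  set c : ℝ := graphLap w m (NormedSpace.exp (τ • lapMatrix w m) *ᵥ f) x with hc
  -- the time-reversed flow
  have hgd : ∀ (z : V) (s : ℝ),
      HasDerivAt (fun u => (NormedSpace.exp ((τ - u) • lapMatrix w m) *ᵥ f) z)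
        (-(graphLap w m (NormedSpace.exp ((τ - s) • lapMatrix w m) *ᵥ f) z)) s := by
    intro z s
    have h := heat_hasDerivAt_rev w m f z τ s
    have h2 : ((lapMatrix w m * NormedSpace.exp ((τ - s) • lapMatrix w m)) *ᵥ f) z
        = graphLap w m (NormedSpace.exp ((τ - s) • lapMatrix w m) *ᵥ f) z := by
      rw [← Matrix.mulVec_mulVec, lapMatrix_mulVec]
    rw [h2] at h
    exact h
  -- Λ as an explicit double sum
  set Lam : ℝ → ℝ := fun s => ∑ y, NormedSpace.exp (s • lapMatrix w m) x y *
      ((1 / (2 * m y)) * ∑ z, w y z *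
        ((NormedSpace.exp ((τ - s) • lapMatrix w m) *ᵥ f) z
          - (NormedSpace.exp ((τ - s) • lapMatrix w m) *ᵥ f) y) ^ 2) with hLam
  -- Λ in terms of Γ of the flow
  have hLam_eq : ∀ s, Lam s = (NormedSpace.exp (s • lapMatrix w m) *ᵥ
      (fun y => bakryGamma w m (NormedSpace.exp ((τ - s) • lapMatrix w m) *ᵥ f)
        (NormedSpace.exp ((τ - s) • lapMatrix w m) *ᵥ f) y)) x := by
    intro s
    rw [mulVec_app]
    simp only [hLam]
    exact Finset.sum_congr rfl fun y _ => by rw [gamma_self_eq]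
  -- derivative of Λ
  set Lam' : ℝ → ℝ := fun s => (NormedSpace.exp (s • lapMatrix w m) *ᵥ
      (fun y => 2 * bakryGamma2 w m (NormedSpace.exp ((τ - s) • lapMatrix w m) *ᵥ f)
        (NormedSpace.exp ((τ - s) • lapMatrix w m) *ᵥ f) y)) x with hLam'
  have hLamDeriv : ∀ s, HasDerivAt Lam (Lam' s) s := by
    intro s
    -- raw derivative of the double sum
    have hraw : HasDerivAt Lam
        (∑ y, ((lapMatrix w m * NormedSpace.exp (s • lapMatrix w m)) x y *
            ((1 / (2 * m y)) * ∑ z, w y z *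
              ((NormedSpace.exp ((τ - s) • lapMatrix w m) *ᵥ f) z
                - (NormedSpace.exp ((τ - s) • lapMatrix w m) *ᵥ f) y) ^ 2)
          + NormedSpace.exp (s • lapMatrix w m) x y *
            ((1 / (2 * m y)) * ∑ z, w y z *
              (2 * ((NormedSpace.exp ((τ - s) • lapMatrix w m) *ᵥ f) z
                - (NormedSpace.exp ((τ - s) • lapMatrix w m) *ᵥ f) y) ^ 1 *
                ((-(graphLap w m (NormedSpace.exp ((τ - s) • lapMatrix w m) *ᵥ f) z))
                 - (-(graphLap w m (NormedSpace.exp ((τ - s) • lapMatrix w m) *ᵥ f) y))))))) s := by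
      rw [hLam]
      apply HasDerivAt.fun_sum
      intro y _
      have hA := heat_entry_hasDerivAt w m x y s
      have hB : HasDerivAt (fun u => (1 / (2 * m y)) * ∑ z, w y z *
          ((NormedSpace.exp ((τ - u) • lapMatrix w m) *ᵥ f) z
            - (NormedSpace.exp ((τ - u) • lapMatrix w m) *ᵥ f) y) ^ 2)
          ((1 / (2 * m y)) * ∑ z, w y z *
            (2 * ((NormedSpace.exp ((τ - s) • lapMatrix w m) *ᵥ f) z
              - (NormedSpace.exp ((τ - s) • lapMatrix w m) *ᵥ f) y) ^ 1 *
              ((-(graphLap w m (NormedSpace.exp ((τ - s) • lapMatrix w m) *ᵥ f) z))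
               - (-(graphLap w m (NormedSpace.exp ((τ - s) • lapMatrix w m) *ᵥ f) y))))) s := by
        apply HasDerivAt.const_mul
        apply HasDerivAt.fun_sum
        intro z _
        exact (((hgd z s).sub (hgd y s)).pow 2).const_mul (w y z)
      exact hA.mul hB
    -- identify the raw derivative with Lam' s
    have hid : (∑ y, ((lapMatrix w m * NormedSpace.exp (s • lapMatrix w m)) x y *
            ((1 / (2 * m y)) * ∑ z, w y z *
              ((NormedSpace.exp ((τ - s) • lapMatrix w m) *ᵥ f) z
                - (NormedSpace.exp ((τ - s) • lapMatrix w m) *ᵥ f) y) ^ 2)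
          + NormedSpace.exp (s • lapMatrix w m) x y *
            ((1 / (2 * m y)) * ∑ z, w y z *
              (2 * ((NormedSpace.exp ((τ - s) • lapMatrix w m) *ᵥ f) z
                - (NormedSpace.exp ((τ - s) • lapMatrix w m) *ᵥ f) y) ^ 1 *
                ((-(graphLap w m (NormedSpace.exp ((τ - s) • lapMatrix w m) *ᵥ f) z))
                 - (-(graphLap w m (NormedSpace.exp ((τ - s) • lapMatrix w m) *ᵥ f) y)))))))
        = Lam' s := by
      rw [Finset.sum_add_distrib]
      have hterm1 : (∑ y, (lapMatrix w m * NormedSpace.exp (s • lapMatrix w m)) x y *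
          ((1 / (2 * m y)) * ∑ z, w y z *
            ((NormedSpace.exp ((τ - s) • lapMatrix w m) *ᵥ f) z
              - (NormedSpace.exp ((τ - s) • lapMatrix w m) *ᵥ f) y) ^ 2))
          = (NormedSpace.exp (s • lapMatrix w m) *ᵥ
              (graphLap w m (fun y => bakryGamma w m
                (NormedSpace.exp ((τ - s) • lapMatrix w m) *ᵥ f)
                (NormedSpace.exp ((τ - s) • lapMatrix w m) *ᵥ f) y))) x := by
        have e1 : (∑ y, (lapMatrix w m * NormedSpace.exp (s • lapMatrix w m)) x y *
            ((1 / (2 * m y)) * ∑ z, w y z *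
              ((NormedSpace.exp ((τ - s) • lapMatrix w m) *ᵥ f) z
                - (NormedSpace.exp ((τ - s) • lapMatrix w m) *ᵥ f) y) ^ 2))
            = ((lapMatrix w m * NormedSpace.exp (s • lapMatrix w m)) *ᵥ
              (fun y => bakryGamma w m
                (NormedSpace.exp ((τ - s) • lapMatrix w m) *ᵥ f)
                (NormedSpace.exp ((τ - s) • lapMatrix w m) *ᵥ f) y)) x := by
          rw [mulVec_app]
          exact Finset.sum_congr rfl fun y _ => by rw [gamma_self_eq]
        rw [e1, heat_commute_L, ← Matrix.mulVec_mulVec, lapMatrix_mulVec]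
      have hterm2 : (∑ y, NormedSpace.exp (s • lapMatrix w m) x y *
          ((1 / (2 * m y)) * ∑ z, w y z *
            (2 * ((NormedSpace.exp ((τ - s) • lapMatrix w m) *ᵥ f) z
              - (NormedSpace.exp ((τ - s) • lapMatrix w m) *ᵥ f) y) ^ 1 *
              ((-(graphLap w m (NormedSpace.exp ((τ - s) • lapMatrix w m) *ᵥ f) z))
               - (-(graphLap w m (NormedSpace.exp ((τ - s) • lapMatrix w m) *ᵥ f) y))))))
          = (NormedSpace.exp (s • lapMatrix w m) *ᵥ
              (fun y => -2 * bakryGamma w m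
                (NormedSpace.exp ((τ - s) • lapMatrix w m) *ᵥ f)
                (graphLap w m (NormedSpace.exp ((τ - s) • lapMatrix w m) *ᵥ f)) y)) x := by
        rw [mulVec_app]
        refine Finset.sum_congr rfl fun y _ => ?_
        congr 1
        rw [gamma_eq]
        have hfact : ∀ S : ℝ, -2 * (1 / (2 * m y) * S) = 1 / (2 * m y) * (-2 * S) := by
          intro S; ring
        rw [hfact]
        congr 1
        rw [Finset.mul_sum]
        exact Finset.sum_congr rfl fun z _ => by ring
      rw [hterm1, hterm2, hLam']
      have e2 : ∀ (A : Matrix V V ℝ) (u v : V → ℝ) (x : V),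
          (A *ᵥ u) x + (A *ᵥ v) x = (A *ᵥ (fun y => u y + v y)) x := by
        intro A u v x
        simp only [Matrix.mulVec, dotProduct, ← Finset.sum_add_distrib]
        exact Finset.sum_congr rfl fun y _ => by ring
      rw [e2]
      congr 1
      funext y
      have := gamma2_self_eq w m (NormedSpace.exp ((τ - s) • lapMatrix w m) *ᵥ f) y
      linarith [this]
    rw [hid] at hraw
    exact hraw
  -- lower bound for Lam' on s ≥ 0
  have hLam'_ge : ∀ s, 0 ≤ s → 2 * K * Lam s + (2 / n) * c ^ 2 ≤ Lam' s := by
    intro s hs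
    -- CD gives pointwise bound
    have hpt : ∀ y, (2 / n) * (graphLap w m (NormedSpace.exp ((τ - s) • lapMatrix w m) *ᵥ f) y) ^ 2
        + 2 * K * bakryGamma w m (NormedSpace.exp ((τ - s) • lapMatrix w m) *ᵥ f)
            (NormedSpace.exp ((τ - s) • lapMatrix w m) *ᵥ f) y
        ≤ 2 * bakryGamma2 w m (NormedSpace.exp ((τ - s) • lapMatrix w m) *ᵥ f)
            (NormedSpace.exp ((τ - s) • lapMatrix w m) *ᵥ f) y := by
      intro y
      have := hCD (NormedSpace.exp ((τ - s) • lapMatrix w m) *ᵥ f) y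
      have h2 : (2:ℝ) / n = 2 * (1 / n) := by ring
      nlinarith [this]
    have hmono := heat_monotone w m hnonneg hm hs
      (u := fun y => (2 / n) * (graphLap w m (NormedSpace.exp ((τ - s) • lapMatrix w m) *ᵥ f) y) ^ 2
        + 2 * K * bakryGamma w m (NormedSpace.exp ((τ - s) • lapMatrix w m) *ᵥ f)
            (NormedSpace.exp ((τ - s) • lapMatrix w m) *ᵥ f) y)
      (v := fun y => 2 * bakryGamma2 w m (NormedSpace.exp ((τ - s) • lapMatrix w m) *ᵥ f)
            (NormedSpace.exp ((τ - s) • lapMatrix w m) *ᵥ f) y) hpt x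
    -- split the left side by linearity
    have hsplit : (NormedSpace.exp (s • lapMatrix w m) *ᵥ
        (fun y => (2 / n) * (graphLap w m (NormedSpace.exp ((τ - s) • lapMatrix w m) *ᵥ f) y) ^ 2
          + 2 * K * bakryGamma w m (NormedSpace.exp ((τ - s) • lapMatrix w m) *ᵥ f)
              (NormedSpace.exp ((τ - s) • lapMatrix w m) *ᵥ f) y)) x
        = (2 / n) * (NormedSpace.exp (s • lapMatrix w m) *ᵥ
            (fun y => (graphLap w m (NormedSpace.exp ((τ - s) • lapMatrix w m) *ᵥ f) y) ^ 2)) x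
          + 2 * K * Lam s := by
      rw [hLam_eq]
      simp only [Matrix.mulVec, dotProduct, Finset.mul_sum, ← Finset.sum_add_distrib]
      exact Finset.sum_congr rfl fun y _ => by ring
    -- Jensen
    have hjen := heat_jensen w m hnonneg hm hs
      (fun y => graphLap w m (NormedSpace.exp ((τ - s) • lapMatrix w m) *ᵥ f) y) x
    -- the mean of the Laplacian of the flow is constant
    have hconst : (NormedSpace.exp (s • lapMatrix w m) *ᵥ
        (fun y => graphLap w m (NormedSpace.exp ((τ - s) • lapMatrix w m) *ᵥ f) y)) x = c := by
      have e1 : (fun y => graphLap w m (NormedSpace.exp ((τ - s) • lapMatrix w m) *ᵥ f) y)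
          = (lapMatrix w m * NormedSpace.exp ((τ - s) • lapMatrix w m)) *ᵥ f := by
        rw [← Matrix.mulVec_mulVec, lapMatrix_mulVec]
      rw [e1, Matrix.mulVec_mulVec, ← mul_assoc, ← heat_commute_L, mul_assoc,
        ← heat_add]
      have : s + (τ - s) = τ := by ring
      rw [this, ← Matrix.mulVec_mulVec, lapMatrix_mulVec, hc]
    have hjen' : c ^ 2 ≤ (NormedSpace.exp (s • lapMatrix w m) *ᵥ
        (fun y => (graphLap w m (NormedSpace.exp ((τ - s) • lapMatrix w m) *ᵥ f) y) ^ 2)) x := by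
      rw [← hconst]
      exact hjen
    rw [hLam'] at *
    rw [hsplit] at hmono
    have h2n : (0:ℝ) < 2 / n := by positivity
    nlinarith [hmono, hjen']
  -- the Gronwall function ψ
  set ψ : ℝ → ℝ := fun s => Real.exp (-(2 * K * s)) * Lam s
      - c ^ 2 / (n * K) * (1 - Real.exp (-(2 * K * s))) with hψ
  have hexpD : ∀ s : ℝ, HasDerivAt (fun u => Real.exp (-(2 * K * u)))
      (-(2 * K) * Real.exp (-(2 * K * s))) s := by
    intro s
    have h1 : HasDerivAt (fun u : ℝ => -(2 * K * u)) (-(2 * K)) s := by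
      simpa using ((hasDerivAt_id s).const_mul (2 * K)).fun_neg
    simpa [mul_comm, Function.comp_def] using (Real.hasDerivAt_exp (-(2 * K * s))).comp s h1
  have hψd : ∀ s, HasDerivAt ψ
      ((-(2 * K) * Real.exp (-(2 * K * s)) * Lam s + Real.exp (-(2 * K * s)) * Lam' s)
        - c ^ 2 / (n * K) * (0 - (-(2 * K) * Real.exp (-(2 * K * s))))) s := by
    intro s
    exact ((hexpD s).mul (hLamDeriv s)).sub
      (((hasDerivAt_const s (1:ℝ)).sub (hexpD s)).const_mul (c ^ 2 / (n * K)))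
  have hψpos : ∀ s, 0 ≤ s →
      0 ≤ (-(2 * K) * Real.exp (-(2 * K * s)) * Lam s + Real.exp (-(2 * K * s)) * Lam' s)
        - c ^ 2 / (n * K) * (0 - (-(2 * K) * Real.exp (-(2 * K * s)))) := by
    intro s hs
    have h1 := hLam'_ge s hs
    have he : 0 < Real.exp (-(2 * K * s)) := Real.exp_pos _
    have hnK : 0 < n * K := mul_pos hn hK
    have key : c ^ 2 / (n * K) * (2 * K) = (2 / n) * c ^ 2 := by
      field_simp
    nlinarith [mul_le_mul_of_nonneg_left h1 he.le]
  have hmono := mono_of_hasDeriv hψd hτ hψpos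
  -- compute ψ 0 and bound ψ τ
  have hψ0 : ψ 0 = bakryGamma w m (NormedSpace.exp (τ • lapMatrix w m) *ᵥ f)
      (NormedSpace.exp (τ • lapMatrix w m) *ᵥ f) x := by
    rw [hψ]
    simp only [mul_zero, neg_zero, Real.exp_zero, one_mul, sub_self, mul_zero, sub_zero]
    rw [hLam_eq 0, heat_zero, Matrix.one_mulVec, sub_zero]
  have hψτ : ψ τ ≤ Real.exp (-(2 * K * τ))
      - c ^ 2 / (n * K) * (1 - Real.exp (-(2 * K * τ))) := by
    rw [hψ]
    have hLτ : Lam τ ≤ 1 := by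
      rw [hLam_eq τ, sub_self, heat_zero, Matrix.one_mulVec]
      exact heat_le_one w m hnonneg hm hτ hf x
    have he : 0 < Real.exp (-(2 * K * τ)) := Real.exp_pos _
    nlinarith [hLτ, he]
  rw [hψ0] at hmono
  have h9 := le_trans hmono hψτ
  linarith [h9]

end Core
lemma mono_of_hasDeriv' {F F' : ℝ → ℝ} {t : ℝ} (ht : 0 ≤ t)
    (hF : ∀ s ∈ Set.Icc (0:ℝ) t, HasDerivAt F (F' s) s)
    (h0 : ∀ s ∈ Set.Icc (0:ℝ) t, 0 ≤ F' s) : F 0 ≤ F t := by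
  have hmono : MonotoneOn F (Set.Icc (0:ℝ) t) := by
    apply monotoneOn_of_deriv_nonneg (convex_Icc 0 t)
    · exact fun s hs => (hF s hs).continuousAt.continuousWithinAt
    · intro s hs
      rw [interior_Icc] at hs
      exact (hF s (Set.mem_Icc_of_Ioo hs)).differentiableAt.differentiableWithinAt
    · intro s hs
      rw [interior_Icc] at hs
      rw [(hF s (Set.mem_Icc_of_Ioo hs)).deriv]
      exact h0 s (Set.mem_Icc_of_Ioo hs)
  exact hmono (Set.left_mem_Icc.2 ht) (Set.right_mem_Icc.2 ht) ht

lemma abs_telescope (g : ℕ → ℝ) (k : ℕ) :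
    |g k - g 0| ≤ ∑ i ∈ Finset.range k, |g (i + 1) - g i| := by
  induction k with
  | zero => simp
  | succ k ih =>
    rw [Finset.sum_range_succ]
    calc |g (k + 1) - g 0| = |(g (k + 1) - g k) + (g k - g 0)| := by ring_nf
      _ ≤ |g (k + 1) - g k| + |g k - g 0| := abs_add_le _ _
      _ ≤ |g (k + 1) - g k| + ∑ i ∈ Finset.range k, |g (i + 1) - g i| := by linarith
      _ = _ := by ring

section Conseq

variable [Fintype V] [DecidableEq V] (w : V → V → ℝ) (m : V → ℝ)

/-- exponential decay of `Γ` along the heat flow. -/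
lemma gamma_decay (hnonneg : ∀ x y, 0 ≤ w x y) (hm : ∀ x, 0 < m x)
    (K n : ℝ) (hK : 0 < K) (hn : 0 < n) (hCD : CDCond w m K n)
    (f : V → ℝ) (hf : ∀ z, bakryGamma w m f f z ≤ 1)
    {τ : ℝ} (hτ : 0 ≤ τ) (x : V) :
    bakryGamma w m (NormedSpace.exp (τ • lapMatrix w m) *ᵥ f)
        (NormedSpace.exp (τ • lapMatrix w m) *ᵥ f) x ≤ Real.exp (-(2 * K * τ)) := by
  have h := core_estimate w m hnonneg hm K n hK hn hCD f hf hτ x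
  have h1 : Real.exp (-(2 * K * τ)) ≤ 1 := by
    rw [Real.exp_le_one_iff]
    nlinarith
  have h2 : 0 ≤ (graphLap w m (NormedSpace.exp (τ • lapMatrix w m) *ᵥ f) x) ^ 2 / (n * K)
      * (1 - Real.exp (-(2 * K * τ))) := by
    apply mul_nonneg
    · positivity
    · linarith
  linarith

/-- quantitative bound on the Laplacian along the heat flow. -/
lemma lap_sq_bound (hnonneg : ∀ x y, 0 ≤ w x y) (hm : ∀ x, 0 < m x)
    (hdeg : ∀ x, 0 < vertexDeg w x)
    (K n : ℝ) (hK : 0 < K) (hn : 0 < n) (hCD : CDCond w m K n)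
    (f : V → ℝ) (hf : ∀ z, bakryGamma w m f f z ≤ 1)
    {τ : ℝ} (hτ : 0 ≤ τ) (x : V) :
    (graphLap w m (NormedSpace.exp (τ • lapMatrix w m) *ᵥ f) x) ^ 2 *
        (K * n / (2 * nDeg w m x) + 1 - Real.exp (-(2 * K * τ)))
      ≤ n * K * Real.exp (-(2 * K * τ)) := by
  have h := core_estimate w m hnonneg hm K n hK hn hCD f hf hτ x
  have hcs := lap_sq_le w m hnonneg hm (NormedSpace.exp (τ • lapMatrix w m) *ᵥ f) x
  have hD : 0 < nDeg w m x := div_pos (hdeg x) (hm x)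
  set c := graphLap w m (NormedSpace.exp (τ • lapMatrix w m) *ᵥ f) x with hc
  set G := bakryGamma w m (NormedSpace.exp (τ • lapMatrix w m) *ᵥ f)
      (NormedSpace.exp (τ • lapMatrix w m) *ᵥ f) x with hG
  -- from hcs : c^2 ≤ 2 * nDeg * G, so G ≥ c^2/(2 nDeg)
  have hnK : 0 < n * K := mul_pos hn hK
  have h1 : c ^ 2 / (2 * nDeg w m x) ≤ G := by
    rw [div_le_iff₀ (by positivity)]
    nlinarith
  -- multiply core estimate by n*K
  have h2 : c ^ 2 / (2 * nDeg w m x) + c ^ 2 / (n * K) * (1 - Real.exp (-(2 * K * τ)))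
      ≤ Real.exp (-(2 * K * τ)) := by linarith
  have h3 := mul_le_mul_of_nonneg_left h2 hnK.le
  calc c ^ 2 * (K * n / (2 * nDeg w m x) + 1 - Real.exp (-(2 * K * τ)))
      = n * K * (c ^ 2 / (2 * nDeg w m x) + c ^ 2 / (n * K) * (1 - Real.exp (-(2 * K * τ)))) := by
        field_simp
        ring
    _ ≤ n * K * Real.exp (-(2 * K * τ)) := h3

end Conseq
lemma arcsin_deriv_aux (K n A : ℝ) (hK : 0 < K) (hn : 0 < n) (hA : 1 < A) {s : ℝ} (hs : 0 ≤ s) :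
    HasDerivAt (fun t => Real.sqrt (n / K) * Real.arcsin (Real.exp (-(K * t)) / Real.sqrt A))
      (-(Real.sqrt (n * K) * Real.exp (-(K * s)) / Real.sqrt (A - Real.exp (-(K * s)) ^ 2)))
      s := by
  set e : ℝ := Real.exp (-(K * s)) with he
  have hsA : 0 < Real.sqrt A := Real.sqrt_pos.2 (by linarith)
  have he0 : 0 < e := Real.exp_pos _
  have he1 : e ≤ 1 := Real.exp_le_one_iff.2 (by nlinarith)
  set x : ℝ := e / Real.sqrt A with hx
  have hx0 : 0 < x := div_pos he0 hsA
  have hx1 : x < 1 := by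
    rw [hx, div_lt_one hsA]
    have h1A : 1 < Real.sqrt A := by
      have := Real.sqrt_lt_sqrt (by norm_num : (0:ℝ) ≤ 1) hA
      simpa using this
    linarith
  have hlin : HasDerivAt (fun t : ℝ => -(K * t)) (-K) s := by
    simpa using ((hasDerivAt_id s).const_mul K).fun_neg
  have hexp : HasDerivAt (fun t : ℝ => Real.exp (-(K * t))) (e * -K) s :=
    (Real.hasDerivAt_exp _).comp s hlin
  have hu : HasDerivAt (fun t : ℝ => Real.exp (-(K * t)) / Real.sqrt A)
      (e * -K / Real.sqrt A) s := hexp.div_const _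
  have harc : HasDerivAt Real.arcsin (1 / Real.sqrt (1 - x ^ 2)) x :=
    Real.hasDerivAt_arcsin (by linarith) (ne_of_lt hx1)
  have hcomp := (harc.comp s hu).const_mul (Real.sqrt (n / K))
  have hAe : 0 < A - e ^ 2 := by nlinarith
  have hsAe : 0 < Real.sqrt (A - e ^ 2) := Real.sqrt_pos.2 hAe
  have hxsq : x ^ 2 = e ^ 2 / A := by
    rw [hx, div_pow, Real.sq_sqrt (by linarith : (0:ℝ) ≤ A)]
  have hs1 : Real.sqrt (1 - x ^ 2) = Real.sqrt (A - e ^ 2) / Real.sqrt A := by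
    rw [hxsq, show 1 - e ^ 2 / A = (A - e ^ 2) / A by field_simp, Real.sqrt_div hAe.le]
  have h2 : Real.sqrt (n / K) * K = Real.sqrt (n * K) := by
    rw [show n * K = n / K * K ^ 2 by field_simp,
      Real.sqrt_mul (div_nonneg hn.le hK.le), Real.sqrt_sq hK.le]
  have heq : Real.sqrt (n / K) * (1 / Real.sqrt (1 - x ^ 2) * (e * -K / Real.sqrt A))
      = -(Real.sqrt (n * K) * e / Real.sqrt (A - e ^ 2)) := by
    rw [hs1, ← h2]
    field_simp
  rw [heq] at hcomp
  exact hcomp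

section Key

variable [Fintype V] [DecidableEq V] (w : V → V → ℝ) (m : V → ℝ)

lemma key_bound (hnonneg : ∀ x y, 0 ≤ w x y) (hm : ∀ x, 0 < m x)
    (hconn : GraphConnected w) (hdeg : ∀ x, 0 < vertexDeg w x)
    (K n : ℝ) (hK : 0 < K) (hn : 0 < n) (hCD : CDCond w m K n)
    (x₀ y₀ : V) (f : V → ℝ) (hf : ∀ z, bakryGamma w m f f z ≤ 1) :
    |f y₀ - f x₀| ≤
      Real.sqrt (n / K) *
        (Real.arcsin (1 / Real.sqrt (K * n / (2 * nDeg w m x₀) + 1)) +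
          Real.arcsin (1 / Real.sqrt (K * n / (2 * nDeg w m y₀) + 1))) := by
  classical
  have hD : ∀ x, 0 < nDeg w m x := fun x => div_pos (hdeg x) (hm x)
  set A₁ : ℝ := K * n / (2 * nDeg w m x₀) + 1 with hA₁
  set A₂ : ℝ := K * n / (2 * nDeg w m y₀) + 1 with hA₂
  have hA₁gt : 1 < A₁ := by
    have h0 : 0 < K * n / (2 * nDeg w m x₀) := div_pos (mul_pos hK hn) (by linarith [hD x₀])
    rw [hA₁]
    linarith
  have hA₂gt : 1 < A₂ := by
    have h0 : 0 < K * n / (2 * nDeg w m y₀) := div_pos (mul_pos hK hn) (by linarith [hD y₀])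
    rw [hA₂]
    linarith
  -- the comparison function
  set H : ℝ → ℝ := fun t => Real.sqrt (n / K) * Real.arcsin (Real.exp (-(K * t)) / Real.sqrt A₁)
      + Real.sqrt (n / K) * Real.arcsin (Real.exp (-(K * t)) / Real.sqrt A₂) with hH
  set h₁ : ℝ → ℝ := fun s =>
      Real.sqrt (n * K) * Real.exp (-(K * s)) / Real.sqrt (A₁ - Real.exp (-(K * s)) ^ 2) with hh₁
  set h₂ : ℝ → ℝ := fun s =>
      Real.sqrt (n * K) * Real.exp (-(K * s)) / Real.sqrt (A₂ - Real.exp (-(K * s)) ^ 2) with hh₂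
  have hHd : ∀ s, 0 ≤ s → HasDerivAt H (-(h₁ s) + -(h₂ s)) s := fun s hs =>
    (arcsin_deriv_aux K n A₁ hK hn hA₁gt hs).add (arcsin_deriv_aux K n A₂ hK hn hA₂gt hs)
  have hHnonneg : ∀ s, 0 ≤ s → 0 ≤ H s := by
    intro s _
    have h1 : 0 ≤ Real.exp (-(K * s)) / Real.sqrt A₁ :=
      div_nonneg (Real.exp_pos _).le (Real.sqrt_nonneg _)
    have h2 : 0 ≤ Real.exp (-(K * s)) / Real.sqrt A₂ :=
      div_nonneg (Real.exp_pos _).le (Real.sqrt_nonneg _)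
    have := Real.arcsin_nonneg.2 h1
    have := Real.arcsin_nonneg.2 h2
    have := Real.sqrt_nonneg (n / K)
    positivity
  -- the evolved difference
  set F : ℝ → ℝ := fun t => (NormedSpace.exp (t • lapMatrix w m) *ᵥ f) y₀
      - (NormedSpace.exp (t • lapMatrix w m) *ᵥ f) x₀ with hF
  have hFd : ∀ s, HasDerivAt F
      (graphLap w m (NormedSpace.exp (s • lapMatrix w m) *ᵥ f) y₀
        - graphLap w m (NormedSpace.exp (s • lapMatrix w m) *ᵥ f) x₀) s := by
    intro s
    have h1 := heat_hasDerivAt w m f y₀ s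
    have h2 := heat_hasDerivAt w m f x₀ s
    have e1 : ∀ z : V, ((lapMatrix w m * NormedSpace.exp (s • lapMatrix w m)) *ᵥ f) z
        = graphLap w m (NormedSpace.exp (s • lapMatrix w m) *ᵥ f) z := by
      intro z
      rw [← Matrix.mulVec_mulVec, lapMatrix_mulVec]
    rw [e1] at h1
    rw [e1] at h2
    exact h1.sub h2
  -- pointwise bound on |Δ P_s f|
  have hexp2 : ∀ s : ℝ, Real.exp (-(2 * K * s)) = Real.exp (-(K * s)) ^ 2 := by
    intro s
    rw [sq, ← Real.exp_add]
    ring_nf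
  have hlapb : ∀ (x : V) (A : ℝ), A = K * n / (2 * nDeg w m x) + 1 → 1 < A →
      ∀ s : ℝ, 0 ≤ s →
      |graphLap w m (NormedSpace.exp (s • lapMatrix w m) *ᵥ f) x|
        ≤ Real.sqrt (n * K) * Real.exp (-(K * s)) / Real.sqrt (A - Real.exp (-(K * s)) ^ 2) := by
    intro x A hAdef hAgt s hs
    have hb := lap_sq_bound w m hnonneg hm hdeg K n hK hn hCD f hf hs x
    rw [hexp2 s] at hb
    set e : ℝ := Real.exp (-(K * s)) with he
    have he0 : 0 < e := Real.exp_pos _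
    have he1 : e ≤ 1 := Real.exp_le_one_iff.2 (by nlinarith)
    have hAe : 0 < A - e ^ 2 := by nlinarith
    set c : ℝ := graphLap w m (NormedSpace.exp (s • lapMatrix w m) *ᵥ f) x with hc
    have hb' : c ^ 2 ≤ n * K * e ^ 2 / (A - e ^ 2) := by
      rw [le_div_iff₀ hAe]
      rw [← hAdef] at hb
      linarith
    have h3 : |c| = Real.sqrt (c ^ 2) := (Real.sqrt_sq_eq_abs c).symm
    rw [h3]
    have h4 : Real.sqrt (n * K * e ^ 2 / (A - e ^ 2))
        = Real.sqrt (n * K) * e / Real.sqrt (A - e ^ 2) := by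
      rw [Real.sqrt_div (by positivity), Real.sqrt_mul (by positivity), Real.sqrt_sq he0.le]
    rw [← h4]
    exact Real.sqrt_le_sqrt hb'
  -- derivative bound
  have hF'b : ∀ s, 0 ≤ s →
      |graphLap w m (NormedSpace.exp (s • lapMatrix w m) *ᵥ f) y₀
        - graphLap w m (NormedSpace.exp (s • lapMatrix w m) *ᵥ f) x₀| ≤ h₁ s + h₂ s := by
    intro s hs
    have h1 := hlapb x₀ A₁ hA₁ hA₁gt s hs
    have h2 := hlapb y₀ A₂ hA₂ hA₂gt s hs
    calc |graphLap w m (NormedSpace.exp (s • lapMatrix w m) *ᵥ f) y₀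
        - graphLap w m (NormedSpace.exp (s • lapMatrix w m) *ᵥ f) x₀|
        ≤ |graphLap w m (NormedSpace.exp (s • lapMatrix w m) *ᵥ f) y₀|
          + |graphLap w m (NormedSpace.exp (s • lapMatrix w m) *ᵥ f) x₀| := abs_sub _ _
      _ ≤ h₂ s + h₁ s := add_le_add h2 h1
      _ = h₁ s + h₂ s := by ring
  -- two monotonicity applications: |F 0| ≤ |F t| + H 0 - H t
  have hkey : ∀ t, 0 ≤ t → |F 0| ≤ |F t| + H 0 - H t := by
    intro t ht
    have hup : F 0 - H 0 ≤ F t - H t := by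
      apply mono_of_hasDeriv' ht (F := fun s => F s - H s)
        (F' := fun s => (graphLap w m (NormedSpace.exp (s • lapMatrix w m) *ᵥ f) y₀
          - graphLap w m (NormedSpace.exp (s • lapMatrix w m) *ᵥ f) x₀)
          - (-(h₁ s) + -(h₂ s)))
      · exact fun s hsI => (hFd s).sub (hHd s hsI.1)
      · intro s hsI
        have := hF'b s hsI.1
        have := abs_le.1 this
        linarith [this.1]
    have hdown : -F 0 - H 0 ≤ -F t - H t := by
      apply mono_of_hasDeriv' ht (F := fun s => -F s - H s)
        (F' := fun s => -(graphLap w m (NormedSpace.exp (s • lapMatrix w m) *ᵥ f) y₀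
          - graphLap w m (NormedSpace.exp (s • lapMatrix w m) *ᵥ f) x₀)
          - (-(h₁ s) + -(h₂ s)))
      · exact fun s hsI => ((hFd s).neg).sub (hHd s hsI.1)
      · intro s hsI
        have := hF'b s hsI.1
        have := abs_le.1 this
        linarith [this.2]
    have habs : |F 0| ≤ |F t| + H 0 - H t :=
      abs_le.2 ⟨by linarith [neg_abs_le (F t)], by linarith [le_abs_self (F t)]⟩
    exact habs
  -- decay of F along the flow
  obtain ⟨k, p, hp0, hpk, hpw⟩ := hconn x₀ y₀
  set C : ℝ := ∑ i ∈ Finset.range k, Real.sqrt (2 * m (p i) / w (p i) (p (i + 1))) with hC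
  have hC0 : 0 ≤ C := Finset.sum_nonneg fun i _ => Real.sqrt_nonneg _
  have hdecay : ∀ t, 0 ≤ t → |F t| ≤ C * Real.exp (-(K * t)) := by
    intro t ht
    set g : V → ℝ := NormedSpace.exp (t • lapMatrix w m) *ᵥ f with hg
    have hFg : F t = g (p k) - g (p 0) := by rw [hF, hp0, hpk]
    rw [hFg]
    have htel := abs_telescope (fun i => g (p i)) k
    refine le_trans htel ?_
    rw [Finset.sum_mul]
    apply Finset.sum_le_sum
    intro i hi
    have hik : i < k := Finset.mem_range.1 hi
    have hwi : 0 < w (p i) (p (i + 1)) := hpw i hik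
    have hGd := gamma_decay w m hnonneg hm K n hK hn hCD f hf ht (p i)
    rw [gamma_self_eq] at hGd
    have hsum_le : w (p i) (p (i + 1)) * (g (p (i + 1)) - g (p i)) ^ 2
        ≤ ∑ z, w (p i) z * (g z - g (p i)) ^ 2 :=
      Finset.single_le_sum (f := fun z => w (p i) z * (g z - g (p i)) ^ 2)
        (fun z _ => mul_nonneg (hnonneg _ z) (sq_nonneg _)) (Finset.mem_univ (p (i + 1)))
    have hmp : 0 < m (p i) := hm (p i)
    have hsum2 : ∑ z, w (p i) z * (g z - g (p i)) ^ 2 ≤ 2 * m (p i) * Real.exp (-(2 * K * t)) := by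
      have h5 : (1 / (2 * m (p i))) * ∑ z, w (p i) z * (g z - g (p i)) ^ 2
          ≤ Real.exp (-(2 * K * t)) := hGd
      calc ∑ z, w (p i) z * (g z - g (p i)) ^ 2
          = 2 * m (p i) * ((1 / (2 * m (p i))) * ∑ z, w (p i) z * (g z - g (p i)) ^ 2) := by
            field_simp
        _ ≤ 2 * m (p i) * Real.exp (-(2 * K * t)) := by
            apply mul_le_mul_of_nonneg_left h5 (by positivity)
    have hsq : (g (p (i + 1)) - g (p i)) ^ 2
        ≤ 2 * m (p i) / w (p i) (p (i + 1)) * Real.exp (-(K * t)) ^ 2 := by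
      rw [← hexp2 t]
      rw [div_mul_eq_mul_div, le_div_iff₀ hwi]
      nlinarith [hsum_le, hsum2]
    have habs : |g (p (i + 1)) - g (p i)| = Real.sqrt ((g (p (i + 1)) - g (p i)) ^ 2) :=
      (Real.sqrt_sq_eq_abs _).symm
    rw [habs]
    have h6 : Real.sqrt (2 * m (p i) / w (p i) (p (i + 1)) * Real.exp (-(K * t)) ^ 2)
        = Real.sqrt (2 * m (p i) / w (p i) (p (i + 1))) * Real.exp (-(K * t)) := by
      rw [Real.sqrt_mul (by positivity), Real.sqrt_sq (Real.exp_pos _).le]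
    calc Real.sqrt ((g (p (i + 1)) - g (p i)) ^ 2)
        ≤ Real.sqrt (2 * m (p i) / w (p i) (p (i + 1)) * Real.exp (-(K * t)) ^ 2) :=
          Real.sqrt_le_sqrt hsq
      _ = _ := h6
  -- compute F 0 and H 0
  have hF0 : F 0 = f y₀ - f x₀ := by
    simp only [hF]
    rw [heat_zero, Matrix.one_mulVec]
  have hH0 : H 0 = Real.sqrt (n / K) *
      (Real.arcsin (1 / Real.sqrt A₁) + Real.arcsin (1 / Real.sqrt A₂)) := by
    simp only [hH]
    norm_num
    ring
  -- pass to the limit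
  have hlim : |F 0| ≤ H 0 := by
    refine le_of_forall_pos_le_add fun ε hε => ?_
    have htend : Filter.Tendsto (fun t : ℝ => C * Real.exp (-(K * t))) Filter.atTop (nhds 0) := by
      have h1 : Filter.Tendsto (fun t : ℝ => K * t) Filter.atTop Filter.atTop :=
        Filter.Tendsto.const_mul_atTop hK Filter.tendsto_id
      have h2 : Filter.Tendsto (fun t : ℝ => -(K * t)) Filter.atTop Filter.atBot :=
        Filter.tendsto_neg_atTop_atBot.comp h1
      have h3 := Real.tendsto_exp_atBot.comp h2
      have h4 := h3.const_mul C
      simpa using h4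
    obtain ⟨t, ht⟩ := ((htend.eventually_lt_const hε).and
      (Filter.eventually_ge_atTop (0:ℝ))).exists
    have hk1 := hkey t ht.2
    have hk2 := hdecay t ht.2
    have hk3 := hHnonneg t ht.2
    linarith [ht.1]
  rw [hF0, hH0] at hlim
  exact hlim

end Key
theorem resistDist_le_of_CD [Fintype V] [DecidableEq V]
    (w : V → V → ℝ) (m : V → ℝ)
    (hsymm : ∀ x y, w x y = w y x) (hnonneg : ∀ x y, 0 ≤ w x y)
    (hdiag : ∀ x, w x x = 0) (hm : ∀ x, 0 < m x)
    (hconn : GraphConnected w) (hdeg : ∀ x, 0 < vertexDeg w x)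
    (K n : ℝ) (hK : 0 < K) (hn : 0 < n) (hCD : CDCond w m K n)
    (x₀ y₀ : V) :
    resistDist w m x₀ y₀ ≤
      Real.sqrt (n / K) *
        (Real.arcsin (1 / Real.sqrt (K * n / (2 * nDeg w m x₀) + 1)) +
          Real.arcsin (1 / Real.sqrt (K * n / (2 * nDeg w m y₀) + 1))) := by
  have hB0 : 0 ≤ Real.sqrt (n / K) *
      (Real.arcsin (1 / Real.sqrt (K * n / (2 * nDeg w m x₀) + 1)) +
        Real.arcsin (1 / Real.sqrt (K * n / (2 * nDeg w m y₀) + 1))) := by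
    have h1 : 0 ≤ Real.arcsin (1 / Real.sqrt (K * n / (2 * nDeg w m x₀) + 1)) :=
      Real.arcsin_nonneg.2 (div_nonneg zero_le_one (Real.sqrt_nonneg _))
    have h2 : 0 ≤ Real.arcsin (1 / Real.sqrt (K * n / (2 * nDeg w m y₀) + 1)) :=
      Real.arcsin_nonneg.2 (div_nonneg zero_le_one (Real.sqrt_nonneg _))
    have h3 := Real.sqrt_nonneg (n / K)
    positivity
  apply Real.sSup_le _ hB0
  rintro r ⟨f, hf, rfl⟩
  exact key_bound w m hnonneg hm hconn hdeg K n hK hn hCD x₀ y₀ f hf
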